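/- arXiv:1503.04587 — 6 statements merged into one kernel-verified Lean document; each statement's English description precedes it below -/
import Mathlib

section
/- If B is a binary doubly even self-orthogonal-free linear [36,7] code with minimum weight at least 16 whose dual code has minimum weight at least 4, then the weight enumerator of B is 1 + 63·y^16 + 63·y^20 + y^36. -/
open scoped Classical
open Polynomial
set_option maxRecDepth 10000

noncomputable def wt (c : Fin 36 → ZMod 2) : ℕ :=
  (Finset.univ.filter fun i => c i ≠ 0).card

section aux
variable (B : Submodule (ZMod 2) (Fin 36 → ZMod 2))

/-- restriction map to coordinates in S -/
noncomputable def resmap (S : Finset (Fin 36)) : B →ₗ[ZMod 2] ({ i // i ∈ S } → ZMod 2) where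
  toFun c := fun i => (c : Fin 36 → ZMod 2) i.1
  map_add' := by intros; rfl
  map_smul' := by intros; rfl

theorem resmap_surj (S : Finset (Fin 36)) (hS : S.card ≤ 3)
    (hdual : ∀ x : Fin 36 → ZMod 2,
      (∀ c ∈ B, ∑ i, x i * c i = 0) → x ≠ 0 → 4 ≤ wt x) :
    Function.Surjective (resmap B S) := by
  by_contra hns
  rw [← LinearMap.range_eq_top] at hns
  obtain ⟨f, hf0, hfbot⟩ :=
    Submodule.exists_dual_map_eq_bot_of_lt_top (lt_top_iff_ne_top.mpr hns) inferInstance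
  set x : Fin 36 → ZMod 2 := fun i =>
    if h : i ∈ S then f (fun j => if (⟨i, h⟩ : { i // i ∈ S }) = j then 1 else 0) else 0 with hx
  have hxS : ∀ i, i ∉ S → x i = 0 := by
    intro i hi; simp [hx, hi]
  have hxval : ∀ (j : { i // i ∈ S }),
      x j.1 = f (fun k => if j = k then 1 else 0) := by
    intro j
    simp only [hx, dif_pos j.2]
  have key : ∀ c ∈ B, ∑ i, x i * c i = 0 := by
    intro c hc
    have h1 : f (resmap B S ⟨c, hc⟩) = 0 := by
      have h2 : f (resmap B S ⟨c, hc⟩) ∈ (LinearMap.range (resmap B S)).map f :=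
        Submodule.mem_map_of_mem (LinearMap.mem_range_self _ _)
      rw [hfbot] at h2
      exact (Submodule.mem_bot (ZMod 2)).mp h2
    calc ∑ i, x i * c i
        = ∑ i ∈ S, x i * c i :=
          (Finset.sum_subset (Finset.subset_univ S)
            (fun i _ hi => by rw [hxS i hi, zero_mul])).symm
      _ = ∑ j ∈ S.attach, x j.1 * c j.1 := (Finset.sum_attach S _).symm
      _ = ∑ j : { i // i ∈ S },
            (resmap B S ⟨c, hc⟩) j • f (fun k => if j = k then 1 else 0) := by
          rw [Finset.univ_eq_attach]
          refine Finset.sum_congr rfl fun j _ => ?_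
          rw [hxval j, smul_eq_mul, mul_comm]
          rfl
      _ = f (resmap B S ⟨c, hc⟩) := (LinearMap.pi_apply_eq_sum_univ f _).symm
      _ = 0 := h1
  have hxne : x ≠ 0 := by
    intro h0
    apply hf0
    apply LinearMap.ext
    intro v
    rw [LinearMap.pi_apply_eq_sum_univ f v]
    have : ∀ j : { i // i ∈ S }, f (fun k => if j = k then 1 else 0) = 0 := by
      intro j; rw [← hxval j, h0]; rfl
    simp [this]
  have h4 := hdual x key hxne
  have hle : wt x ≤ S.card := by
    apply Finset.card_le_card
    intro i hi
    simp only [Finset.mem_filter] at hi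
    by_contra hiS
    exact hi.2 (hxS i hiS)
  omega

theorem count_ones (hdim : Module.finrank (ZMod 2) B = 7)
    (hdual : ∀ x : Fin 36 → ZMod 2,
      (∀ c ∈ B, ∑ i, x i * c i = 0) → x ≠ 0 → 4 ≤ wt x)
    (S : Finset (Fin 36)) (hS : S.card ≤ 3) :
    (Finset.univ.filter fun c : B => ∀ i ∈ S, (c : Fin 36 → ZMod 2) i = 1).card
      * 2 ^ S.card = 128 := by
  have hsurj := resmap_surj B S hS hdual
  have hcardB : Fintype.card B = 128 := by
    rw [Module.card_eq_pow_finrank (K := ZMod 2) (V := B), hdim, ZMod.card]; norm_num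
  -- all fibers have the same cardinality
  have hfib : ∀ y z : { i // i ∈ S } → ZMod 2,
      (Finset.univ.filter fun c : B => resmap B S c = y).card
        = (Finset.univ.filter fun c : B => resmap B S c = z).card := by
    intro y z
    obtain ⟨cy, hcy⟩ := hsurj y
    obtain ⟨cz, hcz⟩ := hsurj z
    apply Finset.card_bij' (fun c _ => c - cy + cz) (fun c _ => c - cz + cy)
    · intro c hc
      simp only [Finset.mem_filter, Finset.mem_univ, true_and] at hc ⊢
      rw [map_add, map_sub, hc, hcy, hcz, sub_self, zero_add]
    · intro c hc
      simp only [Finset.mem_filter, Finset.mem_univ, true_and] at hc ⊢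
      rw [map_add, map_sub, hc, hcy, hcz, sub_self, zero_add]
    · intro c _; abel
    · intro c _; abel
  have hsum : Fintype.card B
      = ∑ y : { i // i ∈ S } → ZMod 2,
          (Finset.univ.filter fun c : B => resmap B S c = y).card := by
    rw [Fintype.card, Finset.card_eq_sum_card_fiberwise
      (f := resmap B S) (t := Finset.univ) (fun x _ => Finset.mem_univ _)]
  have hconst : ∀ y : { i // i ∈ S } → ZMod 2,
      (Finset.univ.filter fun c : B => resmap B S c = y).card
        = (Finset.univ.filter fun c : B => resmap B S c = fun _ => 1).card :=
    fun y => hfib y _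
  rw [Finset.sum_congr rfl (fun y _ => hconst y), Finset.sum_const, Finset.card_univ,
    Fintype.card_fun, Fintype.card_coe, ZMod.card, smul_eq_mul, hcardB] at hsum
  have heq : (Finset.univ.filter fun c : B => ∀ i ∈ S, (c : Fin 36 → ZMod 2) i = 1)
      = (Finset.univ.filter fun c : B => resmap B S c = fun _ => 1) := by
    apply Finset.filter_congr
    intro c _
    constructor
    · intro h; funext j; exact h j.1 j.2
    · intro h i hi; exact congrFun h ⟨i, hi⟩
  rw [heq, mul_comm]
  exact hsum.symm



theorem N1 (hdim : Module.finrank (ZMod 2) B = 7)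
    (hdual : ∀ x : Fin 36 → ZMod 2,
      (∀ c ∈ B, ∑ i, x i * c i = 0) → x ≠ 0 → 4 ≤ wt x) (i : Fin 36) :
    (Finset.univ.filter fun c : B => (c : Fin 36 → ZMod 2) i = 1).card = 64 := by
  have h := count_ones B hdim hdual {i} (by simp)
  rw [Finset.card_singleton] at h
  rw [show (Finset.univ.filter fun c : B => (c : Fin 36 → ZMod 2) i = 1)
      = (Finset.univ.filter fun c : B => ∀ j ∈ ({i} : Finset (Fin 36)),
          (c : Fin 36 → ZMod 2) j = 1) from Finset.filter_congr (by simp)]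
  omega

theorem N2 (hdim : Module.finrank (ZMod 2) B = 7)
    (hdual : ∀ x : Fin 36 → ZMod 2,
      (∀ c ∈ B, ∑ i, x i * c i = 0) → x ≠ 0 → 4 ≤ wt x) (i j : Fin 36) :
    (Finset.univ.filter fun c : B =>
        (c : Fin 36 → ZMod 2) i = 1 ∧ (c : Fin 36 → ZMod 2) j = 1).card
      = 32 + (if i = j then 32 else 0) := by
  by_cases hij : i = j
  · subst hij
    rw [show (Finset.univ.filter fun c : B =>
        (c : Fin 36 → ZMod 2) i = 1 ∧ (c : Fin 36 → ZMod 2) i = 1)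
        = (Finset.univ.filter fun c : B => (c : Fin 36 → ZMod 2) i = 1) from
      Finset.filter_congr (by simp)]
    rw [N1 B hdim hdual i]
    simp
  · have h := count_ones B hdim hdual {i, j} (by
      have := Finset.card_insert_le i ({j} : Finset (Fin 36)); simp at *; omega)
    rw [Finset.card_pair hij] at h
    rw [show (Finset.univ.filter fun c : B => ∀ t ∈ ({i, j} : Finset (Fin 36)),
            (c : Fin 36 → ZMod 2) t = 1)
        = (Finset.univ.filter fun c : B =>
            (c : Fin 36 → ZMod 2) i = 1 ∧ (c : Fin 36 → ZMod 2) j = 1) from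
      Finset.filter_congr (by simp)] at h
    rw [if_neg hij, add_zero]
    omega

theorem N3 (hdim : Module.finrank (ZMod 2) B = 7)
    (hdual : ∀ x : Fin 36 → ZMod 2,
      (∀ c ∈ B, ∑ i, x i * c i = 0) → x ≠ 0 → 4 ≤ wt x) (i j k : Fin 36) :
    (Finset.univ.filter fun c : B =>
        (c : Fin 36 → ZMod 2) i = 1 ∧ (c : Fin 36 → ZMod 2) j = 1
          ∧ (c : Fin 36 → ZMod 2) k = 1).card
      = 16 + (if i = j then 16 else 0) + (if i = k then 16 else 0)
          + (if j = k then 16 else 0) := by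
  by_cases hij : i = j
  · subst hij
    rw [show (Finset.univ.filter fun c : B =>
        (c : Fin 36 → ZMod 2) i = 1 ∧ (c : Fin 36 → ZMod 2) i = 1
          ∧ (c : Fin 36 → ZMod 2) k = 1)
        = (Finset.univ.filter fun c : B =>
            (c : Fin 36 → ZMod 2) i = 1 ∧ (c : Fin 36 → ZMod 2) k = 1) from
      Finset.filter_congr (by simp)]
    rw [N2 B hdim hdual i k]
    by_cases hik : i = k <;> simp [hik]
  · by_cases hik : i = k
    · subst hik
      rw [show (Finset.univ.filter fun c : B =>
          (c : Fin 36 → ZMod 2) i = 1 ∧ (c : Fin 36 → ZMod 2) j = 1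
            ∧ (c : Fin 36 → ZMod 2) i = 1)
          = (Finset.univ.filter fun c : B =>
              (c : Fin 36 → ZMod 2) i = 1 ∧ (c : Fin 36 → ZMod 2) j = 1) from
        Finset.filter_congr (by tauto)]
      rw [N2 B hdim hdual i j]
      have hji : ¬ (j = i) := fun h => hij h.symm
      simp [hij, hji]
    · by_cases hjk : j = k
      · subst hjk
        rw [show (Finset.univ.filter fun c : B =>
            (c : Fin 36 → ZMod 2) i = 1 ∧ (c : Fin 36 → ZMod 2) j = 1
              ∧ (c : Fin 36 → ZMod 2) j = 1)
            = (Finset.univ.filter fun c : B =>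
                (c : Fin 36 → ZMod 2) i = 1 ∧ (c : Fin 36 → ZMod 2) j = 1) from
          Finset.filter_congr (by tauto)]
        rw [N2 B hdim hdual i j]
        simp [hij]
      · -- all distinct
        have h := count_ones B hdim hdual {i, j, k} ?_
        · have hcard : ({i, j, k} : Finset (Fin 36)).card = 3 := by
            rw [Finset.card_insert_of_notMem (by simp [hij, hik]),
              Finset.card_pair hjk]
          rw [hcard] at h
          rw [show (Finset.univ.filter fun c : B =>
                ∀ t ∈ ({i, j, k} : Finset (Fin 36)), (c : Fin 36 → ZMod 2) t = 1)
              = (Finset.univ.filter fun c : B =>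
                  (c : Fin 36 → ZMod 2) i = 1 ∧ (c : Fin 36 → ZMod 2) j = 1
                    ∧ (c : Fin 36 → ZMod 2) k = 1) from
            Finset.filter_congr (by simp)] at h
          rw [if_neg hij, if_neg hik, if_neg hjk]
          omega
        · rw [Finset.card_insert_of_notMem (by simp [hij, hik]),
            Finset.card_pair hjk]


theorem cardB (hdim : Module.finrank (ZMod 2) B = 7) : Fintype.card B = 128 := by
  rw [Module.card_eq_pow_finrank (K := ZMod 2) (V := B), hdim, ZMod.card]; norm_num

theorem wt_eq_sum (c : B) :
    wt (c : Fin 36 → ZMod 2) = ∑ i, (if (c : Fin 36 → ZMod 2) i = 1 then 1 else 0 : ℕ) := by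
  have hiff : ∀ a : ZMod 2, (¬ a = 0) ↔ a = 1 := by decide
  rw [wt, Finset.filter_congr (fun i _ => hiff ((c : Fin 36 → ZMod 2) i)),
    Finset.card_filter]

theorem m1 (hdim : Module.finrank (ZMod 2) B = 7)
    (hdual : ∀ x : Fin 36 → ZMod 2,
      (∀ c ∈ B, ∑ i, x i * c i = 0) → x ≠ 0 → 4 ≤ wt x) :
    ∑ c : B, wt (c : Fin 36 → ZMod 2) = 2304 := by
  calc ∑ c : B, wt (c : Fin 36 → ZMod 2)
      = ∑ c : B, ∑ i, (if (c : Fin 36 → ZMod 2) i = 1 then 1 else 0 : ℕ) :=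
        Finset.sum_congr rfl fun c _ => wt_eq_sum B c
    _ = ∑ i : Fin 36, ∑ c : B, (if (c : Fin 36 → ZMod 2) i = 1 then 1 else 0 : ℕ) :=
        Finset.sum_comm
    _ = ∑ _i : Fin 36, 64 := by
        refine Finset.sum_congr rfl fun i _ => ?_
        rw [← Finset.card_filter]
        exact N1 B hdim hdual i
    _ = 2304 := by simp

theorem m2 (hdim : Module.finrank (ZMod 2) B = 7)
    (hdual : ∀ x : Fin 36 → ZMod 2,
      (∀ c ∈ B, ∑ i, x i * c i = 0) → x ≠ 0 → 4 ≤ wt x) :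
    ∑ c : B, wt (c : Fin 36 → ZMod 2) * wt (c : Fin 36 → ZMod 2) = 42624 := by
  calc ∑ c : B, wt (c : Fin 36 → ZMod 2) * wt (c : Fin 36 → ZMod 2)
      = ∑ c : B, ∑ i, ∑ j, ((if (c : Fin 36 → ZMod 2) i = 1 then 1 else 0 : ℕ)
          * (if (c : Fin 36 → ZMod 2) j = 1 then 1 else 0 : ℕ)) := by
        refine Finset.sum_congr rfl fun c _ => ?_
        rw [wt_eq_sum, Finset.sum_mul_sum]
    _ = ∑ i : Fin 36, ∑ j : Fin 36, ∑ c : B,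
          ((if (c : Fin 36 → ZMod 2) i = 1 then 1 else 0 : ℕ)
          * (if (c : Fin 36 → ZMod 2) j = 1 then 1 else 0 : ℕ)) := by
        rw [Finset.sum_comm]
        refine Finset.sum_congr rfl fun i _ => ?_
        rw [Finset.sum_comm]
    _ = ∑ i : Fin 36, ∑ j : Fin 36, (32 + if i = j then 32 else 0) := by
        refine Finset.sum_congr rfl fun i _ => Finset.sum_congr rfl fun j _ => ?_
        have : ∀ c : B, ((if (c : Fin 36 → ZMod 2) i = 1 then 1 else 0 : ℕ)
            * (if (c : Fin 36 → ZMod 2) j = 1 then 1 else 0 : ℕ))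
            = (if (c : Fin 36 → ZMod 2) i = 1 ∧ (c : Fin 36 → ZMod 2) j = 1
                then 1 else 0 : ℕ) := by
          intro c
          by_cases h1 : (c : Fin 36 → ZMod 2) i = 1 <;>
            by_cases h2 : (c : Fin 36 → ZMod 2) j = 1 <;> simp [h1, h2]
        rw [Finset.sum_congr rfl fun c _ => this c, ← Finset.card_filter]
        exact N2 B hdim hdual i j
    _ = 42624 := by
        simp [Finset.sum_add_distrib, Finset.sum_ite_eq, Finset.card_univ]

theorem m3 (hdim : Module.finrank (ZMod 2) B = 7)
    (hdual : ∀ x : Fin 36 → ZMod 2,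
      (∀ c ∈ B, ∑ i, x i * c i = 0) → x ≠ 0 → 4 ≤ wt x) :
    ∑ c : B, wt (c : Fin 36 → ZMod 2) * wt (c : Fin 36 → ZMod 2)
        * wt (c : Fin 36 → ZMod 2) = 808704 := by
  calc ∑ c : B, wt (c : Fin 36 → ZMod 2) * wt (c : Fin 36 → ZMod 2)
        * wt (c : Fin 36 → ZMod 2)
      = ∑ c : B, ∑ i, ∑ j, ∑ k, ((if (c : Fin 36 → ZMod 2) i = 1 then 1 else 0 : ℕ)
          * (if (c : Fin 36 → ZMod 2) j = 1 then 1 else 0 : ℕ)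
          * (if (c : Fin 36 → ZMod 2) k = 1 then 1 else 0 : ℕ)) := by
        refine Finset.sum_congr rfl fun c _ => ?_
        rw [wt_eq_sum, Finset.sum_mul_sum, Finset.sum_mul]
        refine Finset.sum_congr rfl fun i _ => ?_
        rw [Finset.sum_mul]
        refine Finset.sum_congr rfl fun j _ => ?_
        rw [Finset.mul_sum]
    _ = ∑ i : Fin 36, ∑ j : Fin 36, ∑ k : Fin 36, ∑ c : B,
          ((if (c : Fin 36 → ZMod 2) i = 1 then 1 else 0 : ℕ)
          * (if (c : Fin 36 → ZMod 2) j = 1 then 1 else 0 : ℕ)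
          * (if (c : Fin 36 → ZMod 2) k = 1 then 1 else 0 : ℕ)) := by
        rw [Finset.sum_comm]
        refine Finset.sum_congr rfl fun i _ => ?_
        rw [Finset.sum_comm]
        refine Finset.sum_congr rfl fun j _ => ?_
        rw [Finset.sum_comm]
    _ = ∑ i : Fin 36, ∑ j : Fin 36, ∑ k : Fin 36,
          (16 + (if i = j then 16 else 0) + (if i = k then 16 else 0)
            + (if j = k then 16 else 0)) := by
        refine Finset.sum_congr rfl fun i _ => Finset.sum_congr rfl fun j _ =>
          Finset.sum_congr rfl fun k _ => ?_
        have : ∀ c : B, ((if (c : Fin 36 → ZMod 2) i = 1 then 1 else 0 : ℕ)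
            * (if (c : Fin 36 → ZMod 2) j = 1 then 1 else 0 : ℕ)
            * (if (c : Fin 36 → ZMod 2) k = 1 then 1 else 0 : ℕ))
            = (if (c : Fin 36 → ZMod 2) i = 1 ∧ (c : Fin 36 → ZMod 2) j = 1
                ∧ (c : Fin 36 → ZMod 2) k = 1 then 1 else 0 : ℕ) := by
          intro c
          by_cases h1 : (c : Fin 36 → ZMod 2) i = 1 <;>
            by_cases h2 : (c : Fin 36 → ZMod 2) j = 1 <;>
            by_cases h3 : (c : Fin 36 → ZMod 2) k = 1 <;> simp [h1, h2, h3]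
        rw [Finset.sum_congr rfl fun c _ => this c, ← Finset.card_filter]
        exact N3 B hdim hdual i j k
    _ = 808704 := by
        simp [Finset.sum_add_distrib, Finset.sum_ite_eq, Finset.card_univ,
          mul_add, mul_ite, mul_zero, Finset.mul_sum]
end aux

theorem stmt0 (B : Submodule (ZMod 2) (Fin 36 → ZMod 2))
    (hdim : Module.finrank (ZMod 2) B = 7)
    (hde : ∀ c ∈ B, 4 ∣ wt c)
    (hmin : ∀ c ∈ B, c ≠ 0 → 16 ≤ wt c)
    (hdual : ∀ x : Fin 36 → ZMod 2,
      (∀ c ∈ B, ∑ i, x i * c i = 0) → x ≠ 0 → 4 ≤ wt x) :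
    (∑ x : Fin 36 → ZMod 2, if x ∈ B then (X : Polynomial ℤ) ^ wt x else 0)
      = 1 + 63 * X ^ 16 + 63 * X ^ 20 + X ^ 36 := by
  classical
  set W : Finset ℕ := {0, 16, 20, 24, 28, 32, 36} with hW
  set n : ℕ → ℕ := fun w => (Finset.univ.filter fun c : B => wt (c : Fin 36 → ZMod 2) = w).card
    with hn
  have hmem : ∀ c : B, wt (c : Fin 36 → ZMod 2) ∈ W := by
    intro c
    have h36 : wt (c : Fin 36 → ZMod 2) ≤ 36 := by
      have := Finset.card_filter_le Finset.univ
        (fun i => (c : Fin 36 → ZMod 2) i ≠ 0)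
      simpa [wt] using this
    have hdvd := hde c c.2
    have hdich : wt (c : Fin 36 → ZMod 2) = 0 ∨ 16 ≤ wt (c : Fin 36 → ZMod 2) := by
      by_cases hc : (c : Fin 36 → ZMod 2) = 0
      · left; simp [wt, hc]
      · right; exact hmin c c.2 hc
    simp only [hW, Finset.mem_insert, Finset.mem_singleton]
    omega
  have hfiber : ∀ {M : Type} [AddCommMonoid M] (f : ℕ → M),
      ∑ c : B, f (wt (c : Fin 36 → ZMod 2)) = ∑ w ∈ W, n w • f w := by
    intro M _ f
    rw [← Finset.sum_fiberwise_of_maps_to (fun c _ => hmem c)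
      (fun c : B => f (wt (c : Fin 36 → ZMod 2)))]
    refine Finset.sum_congr rfl fun w _ => ?_
    rw [Finset.sum_congr rfl (fun c hc => by
      rw [(Finset.mem_filter.mp hc).2] :
        ∀ c ∈ Finset.univ.filter fun c : B => wt (c : Fin 36 → ZMod 2) = w,
          f (wt (c : Fin 36 → ZMod 2)) = f w), Finset.sum_const]
  have hexp : ∀ {M : Type} [AddCommMonoid M] (g : ℕ → M),
      ∑ w ∈ W, g w = g 0 + g 16 + g 20 + g 24 + g 28 + g 32 + g 36 := by
    intro M _ g
    rw [hW]
    rw [Finset.sum_insert (by decide), Finset.sum_insert (by decide),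
      Finset.sum_insert (by decide), Finset.sum_insert (by decide),
      Finset.sum_insert (by decide), Finset.sum_insert (by decide),
      Finset.sum_singleton]
    abel
  have hn0 : n 0 = 1 := by
    have hwt0 : ∀ c : B, wt (c : Fin 36 → ZMod 2) = 0 ↔ c = 0 := by
      intro c
      rw [wt, Finset.card_eq_zero, Finset.filter_eq_empty_iff]
      constructor
      · intro h
        apply Subtype.ext
        funext i
        have := h (Finset.mem_univ i)
        simpa using this
      · intro h i _
        rw [h]
        simp
    show (Finset.univ.filter fun c : B => wt (c : Fin 36 → ZMod 2) = 0).card = 1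
    rw [Finset.filter_congr (fun c _ => hwt0 c), Finset.filter_eq']
    simp
  have e0 : ∑ w ∈ W, n w * 1 = 128 := by
    have := hfiber (M := ℕ) (fun _ => 1)
    simp only [smul_eq_mul] at this
    rw [← this, Finset.sum_const, Finset.card_univ, cardB B hdim, smul_eq_mul, mul_one]
  have e1 : ∑ w ∈ W, n w * w = 2304 := by
    have := hfiber (M := ℕ) (fun w => w)
    simp only [smul_eq_mul] at this
    rw [← this]
    exact m1 B hdim hdual
  have e2 : ∑ w ∈ W, n w * (w * w) = 42624 := by
    have := hfiber (M := ℕ) (fun w => w * w)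
    simp only [smul_eq_mul] at this
    rw [← this]
    exact m2 B hdim hdual
  have e3 : ∑ w ∈ W, n w * (w * w * w) = 808704 := by
    have := hfiber (M := ℕ) (fun w => w * w * w)
    simp only [smul_eq_mul] at this
    rw [← this]
    exact m3 B hdim hdual
  rw [hexp] at e0 e1 e2 e3
  norm_num at e0 e1 e2 e3
  have hvals : n 16 = 63 ∧ n 20 = 63 ∧ n 24 = 0 ∧ n 28 = 0 ∧ n 32 = 0 ∧ n 36 = 1 := by
    omega
  obtain ⟨h16, h20, h24, h28, h32, h36⟩ := hvals
  have hLHS : (∑ x : Fin 36 → ZMod 2, if x ∈ B then (X : Polynomial ℤ) ^ wt x else 0)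
      = ∑ c : B, (X : Polynomial ℤ) ^ wt (c : Fin 36 → ZMod 2) := by
    rw [← Finset.sum_filter]
    exact Finset.sum_subtype _ (by simp) _
  rw [hLHS, hfiber (M := Polynomial ℤ) (fun w => (X : Polynomial ℤ) ^ w),
    hexp (M := Polynomial ℤ), hn0, h16, h20, h24, h28, h32, h36]
  simp only [zero_smul, one_smul, pow_zero, add_zero]
  rw [show (63 : ℕ) • (X : Polynomial ℤ) ^ 16 = 63 * X ^ 16 by
      rw [nsmul_eq_mul]; norm_num,
    show (63 : ℕ) • (X : Polynomial ℤ) ^ 20 = 63 * X ^ 20 by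
      rw [nsmul_eq_mul]; norm_num]
end

section
/- Any binary doubly even [36,7] code with minimum weight at least 16 whose dual has minimum weight at least 4 must contain the all-one vector. -/
/-!
Suppose the all-one vector is not in `B`, and put `s(c) = 36 - 2 wt(c) = ∑ i, (-1)^(c i)`.
Below the dual distance, the power moments of `s` over `B` are those over the whole space:
`∑ s = ∑ s³ = 0` and `∑ s² = 36 |B|`. Hence the cubic `(s² - 16)(s + 28)` sums to
`128 · 28 · 20 = 71680` over `B`. The weights allowed by the hypotheses, `0, 16, 20, 24, 28, 32`,
give `s ∈ {36, 4, -4, -12, -20, -28}`, where the cubic is nonnegative; but the zero word alone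
contributes `81920`. The cubic is negative only at `s = -36`, the all-one word.
-/

open scoped Classical

open Finset

def signChar : AddChar (ZMod 2) ℤ := AddChar.zmodChar 2 (by norm_num : (-1 : ℤ) ^ 2 = 1)

lemma signChar_apply (a : ZMod 2) : signChar a = if a = 0 then 1 else -1 := by
  fin_cases a <;> rfl

lemma signChar_eq_one_iff {a : ZMod 2} : signChar a = 1 ↔ a = 0 := by
  rw [signChar_apply]; fin_cases a <;> simp

lemma signChar_sum {α : Type*} (s : Finset α) (f : α → ZMod 2) :
    signChar (∑ i ∈ s, f i) = ∏ i ∈ s, signChar (f i) :=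
  map_prod signChar.toMonoidHom (fun i => Multiplicative.ofAdd (f i)) s

variable {ι : Type*} [Fintype ι]

lemma sum_signChar (c : ι → ZMod 2) :
    ∑ i, signChar (c i) = (Fintype.card ι : ℤ) - 2 * hammingNorm c := by
  have h := card_filter_add_card_filter_not (s := univ) (fun i => c i = 0)
  simp only [signChar_apply, Finset.sum_ite, sum_const, hammingNorm, card_univ] at h ⊢
  rw [← h]
  push_cast
  ring

lemma sum_signChar_dotProduct (B : Submodule (ZMod 2) (ι → ZMod 2)) [Fintype B]
    (x : ι → ZMod 2) :
    ∑ c : B, signChar (x ⬝ᵥ c) = if ∀ c ∈ B, x ⬝ᵥ c = 0 then (Fintype.card B : ℤ) else 0 := by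
  let ψ : AddChar B ℤ := signChar.compAddMonoidHom
    { toFun := fun c => x ⬝ᵥ (c : ι → ZMod 2)
      map_zero' := dotProduct_zero x
      map_add' := fun c d => dotProduct_add x c d }
  have hψ : ψ = 0 ↔ ∀ c ∈ B, x ⬝ᵥ c = 0 := by
    simp [ψ, AddChar.eq_zero_iff, signChar_eq_one_iff]
  have h := ψ.sum_eq_ite
  simp only [hψ] at h
  exact h

lemma sum_single_dotProduct [DecidableEq ι] {α : Type*} (s : Finset α) (f : α → ι)
    (c : ι → ZMod 2) : (∑ t ∈ s, Pi.single (f t) 1) ⬝ᵥ c = ∑ t ∈ s, c (f t) := by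
  simp [sum_dotProduct, single_dotProduct]

lemma hammingNorm_sum_single_le [DecidableEq ι] {α β : Type*} [AddCommMonoid β] [DecidableEq β]
    (s : Finset α) (f : α → ι) (a : α → β) :
    hammingNorm (∑ t ∈ s, (Pi.single (f t) (a t) : ι → β)) ≤ #s := by
  refine (card_le_card fun i hi => ?_).trans (card_image_le (f := f))
  by_contra hf
  simp only [mem_image, not_exists, not_and] at hf
  simp only [mem_filter, mem_univ, true_and, Finset.sum_apply] at hi
  exact hi (sum_eq_zero fun t ht => Pi.single_eq_of_ne (Ne.symm (hf t ht)) _)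

lemma sum_apply_sum_single [DecidableEq ι] {α : Type*} (s : Finset α) (f : α → ι) :
    ∑ i, (∑ t ∈ s, Pi.single (f t) (1 : ZMod 2)) i = #s := by
  simp [Finset.sum_apply, sum_comm (s := univ)]

lemma card_sum_single_eq_zero_of_odd [DecidableEq ι] {k : ℕ} (hk : Odd k) :
    #{f : Fin k → ι | ∑ t, (Pi.single (f t) 1 : ι → ZMod 2) = 0} = 0 := by
  refine card_eq_zero.2 (filter_eq_empty_iff.2 fun f _ hf => ?_)
  have h := sum_apply_sum_single univ f
  rw [hf, card_univ, Fintype.card_fin] at h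
  simp only [Pi.zero_apply, sum_const_zero] at h
  exact Nat.not_even_iff_odd.2 hk (ZMod.natCast_eq_zero_iff_even.1 h.symm)

lemma card_sum_single_two_eq_zero [DecidableEq ι] :
    #{f : Fin 2 → ι | ∑ t, (Pi.single (f t) 1 : ι → ZMod 2) = 0} = Fintype.card ι := by
  have hsingle : ∀ f : Fin 2 → ι, ∑ t, (Pi.single (f t) 1 : ι → ZMod 2) = 0 ↔ f 0 = f 1 := by
    intro f
    rw [Fin.sum_univ_two]
    constructor
    · intro h
      have h0 := congrFun h (f 0)
      by_contra hne
      simp [Pi.single_eq_of_ne hne] at h0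
    · intro h
      rw [h, ← Pi.single_add]
      simp [show (1 : ZMod 2) + 1 = 0 from rfl]
  have himage : ({f : Fin 2 → ι | ∑ t, (Pi.single (f t) 1 : ι → ZMod 2) = 0} : Finset _) =
      univ.image fun i _ => i := by
    ext f
    simp only [hsingle, mem_filter, mem_univ, true_and, mem_image]
    refine ⟨fun h => ⟨f 0, funext fun t => ?_⟩, ?_⟩
    · fin_cases t <;> simp [h]
    · rintro ⟨i, rfl⟩; rfl
  rw [himage, card_image_of_injective _ fun i j h => congrFun h 0, card_univ]

def DualDistanceGT (B : Submodule (ZMod 2) (ι → ZMod 2)) (k : ℕ) : Prop :=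
  ∀ x : ι → ZMod 2, (∀ c ∈ B, x ⬝ᵥ c = 0) → x ≠ 0 → k < hammingNorm x

lemma DualDistanceGT.mono {B : Submodule (ZMod 2) (ι → ZMod 2)} {k l : ℕ}
    (hB : DualDistanceGT B k) (hlk : l ≤ k) : DualDistanceGT B l :=
  fun x hx hx0 => (hB x hx hx0).trans_le' hlk

lemma DualDistanceGT.forall_dotProduct_eq_zero_iff {B : Submodule (ZMod 2) (ι → ZMod 2)}
    {k : ℕ} (hB : DualDistanceGT B k) {x : ι → ZMod 2} (hx : hammingNorm x ≤ k) :
    (∀ c ∈ B, x ⬝ᵥ c = 0) ↔ x = 0 := by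
  refine ⟨fun h => by_contra fun hx0 => (hB x h hx0).not_ge hx, ?_⟩
  rintro rfl c -
  exact zero_dotProduct c

/-- Writing `n - 2 wt c = ∑ i, (-1)^(c i)` and expanding the power turns the moment into
character sums over `B`; each vanishes unless its index vector is dual to `B`, which below the
dual distance means that it is zero. -/
theorem sum_card_sub_two_mul_hammingNorm_pow [DecidableEq ι]
    (B : Submodule (ZMod 2) (ι → ZMod 2)) [Fintype B] {k : ℕ} (hB : DualDistanceGT B k) :
    ∑ c : B, ((Fintype.card ι : ℤ) - 2 * hammingNorm (c : ι → ZMod 2)) ^ k =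
      Fintype.card B * #{f : Fin k → ι | ∑ t, (Pi.single (f t) 1 : ι → ZMod 2) = 0} := by
  calc ∑ c : B, ((Fintype.card ι : ℤ) - 2 * hammingNorm (c : ι → ZMod 2)) ^ k
      = ∑ c : B, ∑ f : Fin k → ι, signChar ((∑ t, (Pi.single (f t) 1 : ι → ZMod 2)) ⬝ᵥ c) := by
        refine sum_congr rfl fun c _ => ?_
        simp only [← sum_signChar, Fintype.sum_pow, sum_single_dotProduct, signChar_sum]
    _ = ∑ f : Fin k → ι, if ∑ t, (Pi.single (f t) 1 : ι → ZMod 2) = 0 then (Fintype.card B : ℤ)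
        else 0 := by
        rw [sum_comm]
        refine sum_congr rfl fun f _ => ?_
        rw [sum_signChar_dotProduct]
        congr 1
        refine propext (hB.forall_dotProduct_eq_zero_iff ?_)
        simpa using hammingNorm_sum_single_le univ f fun _ => (1 : ZMod 2)
    _ = _ := by simp [sum_ite, mul_comm]

theorem sum_sq_sub_mul_add_eq [DecidableEq ι] (B : Submodule (ZMod 2) (ι → ZMod 2)) [Fintype B]
    (hB : DualDistanceGT B 3) (a b : ℤ) :
    ∑ c : B, (((Fintype.card ι : ℤ) - 2 * hammingNorm (c : ι → ZMod 2)) ^ 2 - a) *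
      ((Fintype.card ι : ℤ) - 2 * hammingNorm (c : ι → ZMod 2) + b) =
      Fintype.card B * b * (Fintype.card ι - a) := by
  have h1 := sum_card_sub_two_mul_hammingNorm_pow B (hB.mono (by norm_num : 1 ≤ 3))
  have h2 := sum_card_sub_two_mul_hammingNorm_pow B (hB.mono (by norm_num : 2 ≤ 3))
  have h3 := sum_card_sub_two_mul_hammingNorm_pow B hB
  rw [card_sum_single_eq_zero_of_odd odd_one] at h1
  rw [card_sum_single_two_eq_zero] at h2
  rw [card_sum_single_eq_zero_of_odd (by decide)] at h3
  set n : ℤ := (Fintype.card ι : ℤ)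
  calc _ = ∑ c : B, ((n - 2 * hammingNorm (c : ι → ZMod 2)) ^ 3
          + b * (n - 2 * hammingNorm (c : ι → ZMod 2)) ^ 2
          - a * (n - 2 * hammingNorm (c : ι → ZMod 2)) ^ 1 - a * b) :=
        sum_congr rfl fun c _ => by ring
    _ = _ := by
      simp only [sum_sub_distrib, sum_add_distrib, ← mul_sum, h1, h2, h3, sum_const, card_univ,
        nsmul_eq_mul]
      push_cast
      ring

lemma eq_one_of_hammingNorm_eq_card {c : ι → ZMod 2} (h : hammingNorm c = Fintype.card ι) :
    c = 1 := by
  funext i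
  have hi : i ∈ ({i | c i ≠ 0} : Finset ι) := by
    rw [eq_univ_of_card _ h]
    exact mem_univ i
  exact Fin.eq_one_of_ne_zero (c i) (mem_filter.1 hi).2

lemma cubic_nonneg_of_weight {w : ℕ} (h4 : 4 ∣ w) (h16 : w = 0 ∨ 16 ≤ w) (h36 : w < 36) :
    (0 : ℤ) ≤ ((36 - 2 * w) ^ 2 - 16) * (36 - 2 * w + 28) := by
  obtain ⟨m, rfl⟩ := h4
  have : m ≤ 8 := by omega
  interval_cases m <;> omega

theorem stmt1 (B : Submodule (ZMod 2) (Fin 36 → ZMod 2))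
    (hdim : Module.finrank (ZMod 2) B = 7)
    (hde : ∀ c ∈ B, 4 ∣ wt c)
    (hmin : ∀ c ∈ B, c ≠ 0 → 16 ≤ wt c)
    (hdual : ∀ x : Fin 36 → ZMod 2,
      (∀ c ∈ B, ∑ i, x i * c i = 0) → x ≠ 0 → 4 ≤ wt x) :
    (fun _ : Fin 36 => (1 : ZMod 2)) ∈ B := by
  by_contra hone
  have hcard : Fintype.card B = 128 := by
    rw [Module.card_eq_pow_finrank (K := ZMod 2), hdim, ZMod.card]; rfl
  let s (c : B) : ℤ := Fintype.card (Fin 36) - 2 * hammingNorm (c : Fin 36 → ZMod 2)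
  have hsum : ∑ c, (s c ^ 2 - 16) * (s c + 28) = 71680 := by
    rw [sum_sq_sub_mul_add_eq B hdual, hcard, Fintype.card_fin]; norm_num
  have hnonneg (c : B) : 0 ≤ (s c ^ 2 - 16) * (s c + 28) := by
    obtain ⟨c, hc⟩ := c
    refine cubic_nonneg_of_weight (hde c hc) ?_ ?_
    · by_cases hc0 : c = 0
      · exact Or.inl (by simp [hc0])
      · exact Or.inr (hmin c hc hc0)
    · refine (hammingNorm_le_card_fintype (x := c)).lt_of_ne fun h36 => hone ?_
      rwa [eq_one_of_hammingNorm_eq_card h36] at hc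
  have h0 := single_le_sum (f := fun c => (s c ^ 2 - 16) * (s c + 28))
    (fun c _ => hnonneg c) (mem_univ 0)
  rw [hsum] at h0
  simp only [s, ZeroMemClass.coe_zero, hammingNorm_zero, Fintype.card_fin] at h0
  norm_num at h0
end

section
/- If B is a binary doubly even [36,8] code with minimum weight at least 16 whose dual code has minimum weight at least 4, then the weight enumerator of B is 1 + 153·y^16 + 72·y^20 + 30·y^24. -/
open scoped Classical
open Polynomial

/-!
Put `χ a = (-1) ^ a` and `s c = ∑ i, χ (c i) = 36 - 2 * wt c`. Since no nonzero vector of weight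
at most 3 is orthogonal to `B`, the characters `c ↦ χ (c i)`, `c ↦ χ (c i + c j)` (`i ≠ j`) and
`c ↦ χ (c i + c j + c k)` of `B` are nontrivial and sum to zero over `B`. Expanding powers of `s`
therefore gives the moments `∑ s = 0`, `∑ s ^ 2 = 36 * |B|`, `∑ s ^ 3 = 0` over `B`.
The cubic `(s - 4) (s + 4) (s + 12)` is `≤ 0` at every nonzero codeword (weights `16, 20, …, 36`),
and by the moments its sum over `B` equals its value at `c = 0`, so it vanishes on all nonzero
codewords: their weights are `16`, `20` or `24`. The moments of order `0, 1, 2` then are three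
linear equations for the three weight counts.
-/

open Matrix

variable {ι : Type*} [Fintype ι]

lemma hammingNorm_add_le {β : ι → Type*} [∀ i, AddZeroClass (β i)] [∀ i, DecidableEq (β i)]
    (x y : ∀ i, β i) : hammingNorm (x + y) ≤ hammingNorm x + hammingNorm y := by
  refine (Finset.card_le_card fun i hi => ?_).trans (Finset.card_union_le _ _)
  simp only [Finset.mem_filter, Finset.mem_union, Finset.mem_univ, true_and] at hi ⊢
  by_contra! h
  simp [h.1, h.2] at hi

lemma hammingNorm_single_le [DecidableEq ι] {β : Type*} [Zero β] [DecidableEq β] (i : ι)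
    (a : β) : hammingNorm (Pi.single i a : ι → β) ≤ 1 := by
  refine (Finset.card_le_card fun j hj => ?_).trans (Finset.card_singleton i).le
  by_contra h
  simp_all [Pi.single_eq_of_ne (Finset.mem_singleton.not.mp h)]

namespace BinaryCode

noncomputable def sign : AddChar (ZMod 2) ℤ := AddChar.zmodChar 2 (ζ := -1) (by norm_num)

lemma sign_apply (a : ZMod 2) : sign a = if a = 0 then 1 else -1 := by
  fin_cases a <;> rfl

noncomputable def signSum (c : ι → ZMod 2) : ℤ := ∑ i, sign (c i)

lemma signSum_eq (c : ι → ZMod 2) : signSum c = Fintype.card ι - 2 * hammingNorm c := by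
  simp only [signSum, sign_apply, hammingNorm, Finset.card_filter]
  push_cast
  rw [Finset.mul_sum, ← Finset.card_univ, Finset.card_eq_sum_ones, Nat.cast_sum,
    ← Finset.sum_sub_distrib]
  refine Finset.sum_congr rfl fun i _ => ?_
  split_ifs <;> simp_all

def DualDistanceGE (B : Submodule (ZMod 2) (ι → ZMod 2)) (d : ℕ) : Prop :=
  ∀ x : ι → ZMod 2, (∀ c ∈ B, x ⬝ᵥ c = 0) → x ≠ 0 → d ≤ hammingNorm x

noncomputable def weightCount (B : Submodule (ZMod 2) (ι → ZMod 2)) [Fintype B] (j : ℕ) : ℕ :=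
  (Finset.univ.filter fun c : B => hammingNorm c.1 = j).card

variable {B : Submodule (ZMod 2) (ι → ZMod 2)} {d : ℕ}

lemma DualDistanceGE.mono {d' : ℕ} (h : DualDistanceGE B d) (hd : d' ≤ d) :
    DualDistanceGE B d' :=
  fun x hx hx0 => hd.trans (h x hx hx0)

section Sums

variable [Fintype B]

lemma weightCount_zero : weightCount B 0 = 1 := by
  rw [weightCount, Finset.card_eq_one]
  refine ⟨0, Finset.eq_singleton_iff_unique_mem.mpr ⟨?_, fun c hc => ?_⟩⟩
  · rw [Finset.mem_filter]
    exact ⟨Finset.mem_univ _, hammingNorm_zero⟩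
  · rw [Finset.mem_filter, hammingNorm_eq_zero] at hc
    exact Subtype.ext hc.2

lemma sum_comp_hammingNorm {M : Type*} [AddCommMonoid M] {T : Finset ℕ}
    (hT : ∀ c : B, hammingNorm c.1 ∈ T) (f : ℕ → M) :
    ∑ c : B, f (hammingNorm c.1) = ∑ j ∈ T, weightCount B j • f j := by
  rw [← Finset.sum_fiberwise_of_maps_to' (fun c _ => hT c)]
  simp [weightCount]

lemma sum_sign_dotProduct_eq_zero {x : ι → ZMod 2} (hx : ∃ c ∈ B, x ⬝ᵥ c ≠ 0) :
    ∑ c : B, sign (x ⬝ᵥ c) = 0 := by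
  let ψ : AddChar B ℤ :=
    { toFun c := sign (x ⬝ᵥ c)
      map_zero_eq_one' := by simp
      map_add_eq_mul' a b := by simp [dotProduct_add, AddChar.map_add_eq_mul] }
  refine AddChar.sum_eq_zero_of_ne_one (ψ := ψ) (AddChar.ne_one_iff.mpr ?_)
  obtain ⟨c, hc, hxc⟩ := hx
  exact ⟨⟨c, hc⟩, by simp [ψ, sign_apply, hxc]⟩

lemma DualDistanceGE.sum_sign_dotProduct_eq_zero (hB : DualDistanceGE B d) {x : ι → ZMod 2}
    (hx0 : x ≠ 0) (hx : hammingNorm x < d) : ∑ c : B, sign (x ⬝ᵥ c) = 0 := by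
  refine BinaryCode.sum_sign_dotProduct_eq_zero ?_
  by_contra! h
  exact hx.not_ge (hB x h hx0)

variable [DecidableEq ι]

lemma sum_sign (hB : DualDistanceGE B 2) (i : ι) : ∑ c : B, sign (c.1 i) = 0 := by
  have hx0 : (Pi.single i 1 : ι → ZMod 2) ≠ 0 := fun h => by simpa using congrFun h i
  simpa [single_dotProduct] using
    hB.sum_sign_dotProduct_eq_zero hx0 ((hammingNorm_single_le i 1).trans_lt one_lt_two)

lemma sum_sign_mul_sign (hB : DualDistanceGE B 3) (i j : ι) :
    ∑ c : B, sign (c.1 i) * sign (c.1 j) = if i = j then (Fintype.card B : ℤ) else 0 := by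
  split_ifs with hij
  · subst hij
    simp [← AddChar.map_add_eq_mul, CharTwo.add_self_eq_zero]
  · have hx0 : (Pi.single i 1 + Pi.single j 1 : ι → ZMod 2) ≠ 0 := fun h => by
      simpa [Pi.single_eq_of_ne hij] using congrFun h i
    have hx : hammingNorm (Pi.single i 1 + Pi.single j 1 : ι → ZMod 2) < 3 := by
      linarith [hammingNorm_add_le (Pi.single i 1 : ι → ZMod 2) (Pi.single j 1),
        hammingNorm_single_le i (1 : ZMod 2), hammingNorm_single_le j (1 : ZMod 2)]
    simpa [← AddChar.map_add_eq_mul, add_dotProduct, single_dotProduct] using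
      hB.sum_sign_dotProduct_eq_zero hx0 hx

lemma sum_sign_mul_sign_mul_sign (hB : DualDistanceGE B 4) (i j k : ι) :
    ∑ c : B, sign (c.1 i) * sign (c.1 j) * sign (c.1 k) = 0 := by
  set x : ι → ZMod 2 := Pi.single i 1 + Pi.single j 1 + Pi.single k 1
  have hx0 : x ≠ 0 := by
    intro h
    have h1 : x ⬝ᵥ (fun _ => 1) = 1 := by
      simp only [x, add_dotProduct, single_dotProduct]
      decide
    simp [h] at h1
  have hx : hammingNorm x < 4 := by
    linarith [hammingNorm_add_le (Pi.single i 1 + Pi.single j 1 : ι → ZMod 2) (Pi.single k 1),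
      hammingNorm_add_le (Pi.single i 1 : ι → ZMod 2) (Pi.single j 1),
      hammingNorm_single_le i (1 : ZMod 2), hammingNorm_single_le j (1 : ZMod 2),
      hammingNorm_single_le k (1 : ZMod 2)]
  simpa [x, ← AddChar.map_add_eq_mul, add_dotProduct, single_dotProduct] using
    hB.sum_sign_dotProduct_eq_zero hx0 hx

lemma sum_signSum (hB : DualDistanceGE B 2) : ∑ c : B, signSum c.1 = 0 := by
  simp only [signSum]
  rw [Finset.sum_comm]
  exact Finset.sum_eq_zero fun i _ => sum_sign hB i

lemma sum_signSum_sq (hB : DualDistanceGE B 3) :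
    ∑ c : B, signSum c.1 ^ 2 = Fintype.card ι * Fintype.card B := by
  simp only [signSum, sq, Finset.sum_mul_sum]
  rw [Finset.sum_comm]
  simp [Finset.sum_comm (γ := B), sum_sign_mul_sign hB]

lemma sum_signSum_pow_three (hB : DualDistanceGE B 4) : ∑ c : B, signSum c.1 ^ 3 = 0 := by
  simp only [signSum, pow_three', Finset.sum_mul, Finset.mul_sum]
  rw [Finset.sum_comm]
  refine Finset.sum_eq_zero fun i _ => ?_
  rw [Finset.sum_comm]
  refine Finset.sum_eq_zero fun j _ => ?_
  rw [Finset.sum_comm]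
  exact Finset.sum_eq_zero fun k _ => sum_sign_mul_sign_mul_sign hB k j i

end Sums

section Length36

variable {B : Submodule (ZMod 2) (Fin 36 → ZMod 2)} [Fintype B]

lemma hammingNorm_mem_of_doublyEven (hcard : Fintype.card B = 256)
    (hde : ∀ c ∈ B, 4 ∣ hammingNorm c) (hmin : ∀ c ∈ B, c ≠ 0 → 16 ≤ hammingNorm c)
    (hB : DualDistanceGE B 4) (c : B) : hammingNorm c.1 ∈ ({0, 16, 20, 24} : Finset ℕ) := by
  -- the roots `s = 4, -4, -12` of `P` are the weights `16, 20, 24`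
  let P : B → ℤ := fun c => (signSum c.1 - 4) * (signSum c.1 + 4) * (signSum c.1 + 12)
  have hP : ∀ c : B, P c = signSum c.1 ^ 3 + 12 * signSum c.1 ^ 2 - 16 * signSum c.1 - 192 :=
    fun c => by ring
  have hsum : ∑ c : B, P c = P 0 := by
    simp only [hP, Finset.sum_sub_distrib, Finset.sum_add_distrib, ← Finset.mul_sum,
      sum_signSum (hB.mono (by norm_num)), sum_signSum_sq (hB.mono (by norm_num)),
      sum_signSum_pow_three hB, Finset.sum_const, Finset.card_univ, hcard]
    simp [signSum_eq]
  have hrest : ∑ c ∈ Finset.univ.erase 0, P c = 0 := by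
    linarith [Finset.sum_erase_add Finset.univ P (Finset.mem_univ 0)]
  have hweight : ∀ c : B, c ≠ 0 →
      hammingNorm c.1 ∈ ({16, 20, 24, 28, 32, 36} : Finset ℕ) := fun c hc => by
    have := hde c.1 c.2
    have := hmin c.1 c.2 (by simpa using hc)
    have : hammingNorm c.1 ≤ 36 := hammingNorm_le_card_fintype.trans (by simp)
    simp only [Finset.mem_insert, Finset.mem_singleton]
    omega
  have hnonpos : ∀ c ∈ Finset.univ.erase 0, P c ≤ 0 := fun c hc => by
    have := hweight c (Finset.ne_of_mem_erase hc)
    simp only [Finset.mem_insert, Finset.mem_singleton] at this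
    rcases this with h | h | h | h | h | h <;> simp [P, signSum_eq, h]
  by_cases hc : c = 0
  · simp [hc]
  have hPc : P c = 0 := (Finset.sum_eq_zero_iff_of_nonpos hnonpos).mp hrest c
    (Finset.mem_erase.mpr ⟨hc, Finset.mem_univ c⟩)
  have := hweight c hc
  simp only [Finset.mem_insert, Finset.mem_singleton] at this ⊢
  rcases this with h | h | h | h | h | h <;> simp_all [P, signSum_eq]

lemma weightCount_eq (hcard : Fintype.card B = 256)
    (hT : ∀ c : B, hammingNorm c.1 ∈ ({0, 16, 20, 24} : Finset ℕ)) (hB : DualDistanceGE B 4) :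
    weightCount B 16 = 153 ∧ weightCount B 20 = 72 ∧ weightCount B 24 = 30 := by
  have hs : ∀ c : B, signSum c.1 = 36 - 2 * (hammingNorm c.1 : ℤ) := fun c => by
    simp [signSum_eq]
  have h1 := sum_comp_hammingNorm hT (fun _ => (1 : ℤ))
  have h2 := sum_comp_hammingNorm hT (fun j => 36 - 2 * (j : ℤ))
  have h3 := sum_comp_hammingNorm hT (fun j => (36 - 2 * (j : ℤ)) ^ 2)
  simp only [← hs, sum_signSum (hB.mono (by norm_num)), sum_signSum_sq (hB.mono (by norm_num)),
    Finset.sum_const, Finset.card_univ, hcard] at h1 h2 h3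
  simp [weightCount_zero] at h1 h2 h3
  omega

end Length36

end BinaryCode

open BinaryCode

theorem stmt2 (B : Submodule (ZMod 2) (Fin 36 → ZMod 2))
    (hdim : Module.finrank (ZMod 2) B = 8)
    (hde : ∀ c ∈ B, 4 ∣ wt c)
    (hmin : ∀ c ∈ B, c ≠ 0 → 16 ≤ wt c)
    (hdual : ∀ x : Fin 36 → ZMod 2,
      (∀ c ∈ B, ∑ i, x i * c i = 0) → x ≠ 0 → 4 ≤ wt x) :
    (∑ x : Fin 36 → ZMod 2, if x ∈ B then (X : Polynomial ℤ) ^ wt x else 0)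
      = 1 + 153 * X ^ 16 + 72 * X ^ 20 + 30 * X ^ 24 := by
  rw [show wt = hammingNorm from rfl] at hde hmin hdual ⊢
  have hcard : Fintype.card B = 256 := by
    rw [Module.card_eq_pow_finrank (K := ZMod 2), hdim, ZMod.card]; rfl
  have hT := hammingNorm_mem_of_doublyEven hcard hde hmin hdual
  obtain ⟨h16, h20, h24⟩ := weightCount_eq hcard hT hdual
  rw [← Finset.sum_filter, Finset.sum_subtype _ (p := (· ∈ B)) (by simp),
    sum_comp_hammingNorm hT, Finset.sum_insert (by decide), Finset.sum_insert (by decide),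
    Finset.sum_insert (by decide), Finset.sum_singleton, weightCount_zero, h16, h20, h24]
  simp only [nsmul_eq_mul, pow_zero, one_smul]
  push_cast
  ring
end

section
/- If a binary [36,k] code B has minimum weight at least 16 and its dual has minimum weight at least 4, and B is doubly even, then k ≤ 8. -/
open scoped Classical

/-!
A Delsarte-type linear programming bound. If the dual code has no nonzero word of weight at
most `t`, then for every set `S` of at most `t` coordinates exactly `|B| / 2^|S|` codewords are
`1` on `S`: expanding `∏_{i ∈ S} (1 - (-1)^{c_i})` turns the count into character sums over `B`,
which vanish except for dual codewords supported in `S`. Summing over `S`, the binomial moments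
`∑_{c ∈ B} C(wt c, d)` with `d ≤ 3` agree with those of the whole space, and the fourth one is at
least as large. Pairing these with `F(w) = (w - 16)(w - 22)²(36 - w)`, which is nonnegative on
the weights `16, …, 36` allowed for nonzero codewords, gives
`F(0) ≤ ∑_{c ∈ B} F(wt c) ≤ -1269 |B| / 2`, i.e. `|B| ≤ 439 < 2⁹`.
-/

open Finset

lemma AddChar.map_sum_eq_prod {A M κ : Type*} [AddCommMonoid A] [CommMonoid M]
    (ψ : AddChar A M) (s : Finset κ) (f : κ → A) : ψ (∑ i ∈ s, f i) = ∏ i ∈ s, ψ (f i) := by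
  induction s using Finset.cons_induction with
  | empty => simp
  | cons a s ha ih => rw [sum_cons, prod_cons, AddChar.map_add_eq_mul, ih]

namespace BinaryCode

def signChar : AddChar (ZMod 2) ℤ := AddChar.zmodChar 2 (by norm_num : (-1 : ℤ) ^ 2 = 1)

lemma signChar_eq_one_iff (a : ZMod 2) : signChar a = 1 ↔ a = 0 := by
  rw [signChar, AddChar.zmodChar_apply]; revert a; decide

lemma one_sub_signChar (a : ZMod 2) : 1 - signChar a = if a = 1 then 2 else 0 := by
  rw [signChar, AddChar.zmodChar_apply]; revert a; decide

section Dual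

variable {ι : Type*} (B : Submodule (ZMod 2) (ι → ZMod 2))

/-- The indicator vector of `y` lies in the dual code of `B`. -/
def IsDualSupport (y : Finset ι) : Prop := ∀ c ∈ B, ∑ i ∈ y, c i = 0

def DualDistanceGT (t : ℕ) : Prop :=
  ∀ y : Finset ι, y.Nonempty → #y ≤ t → ¬ IsDualSupport B y

def paritySum (y : Finset ι) : B →+ ZMod 2 where
  toFun c := ∑ i ∈ y, (c : ι → ZMod 2) i
  map_zero' := by simp
  map_add' c d := by simp [sum_add_distrib]

end Dual

lemma dualDistanceGT_of_lt_hammingNorm {ι : Type*} [Fintype ι] {B : Submodule (ZMod 2) (ι → ZMod 2)} {t : ℕ}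
    (hdual : ∀ x : ι → ZMod 2, (∀ c ∈ B, ∑ i, x i * c i = 0) → x ≠ 0 → t < hammingNorm x) :
    DualDistanceGT B t := by
  intro y ⟨i, hi⟩ hyt hyB
  let x : ι → ZMod 2 := fun j => if j ∈ y then 1 else 0
  have hx : x ≠ 0 := fun h => by simpa [x, hi] using congrFun h i
  have hxB : ∀ c ∈ B, ∑ j, x j * c j = 0 := fun c hc => by
    simpa [x, ite_mul, sum_ite_mem] using hyB c hc
  have hxy : hammingNorm x = #y := by simp [hammingNorm, x]
  have := hdual x hxB hx
  omega

section Moments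

-- With `DecidableEq ι` in scope, the `Fintype` and `Decidable` instances in the statements below
-- are the ones Lean finds for `ι = Fin 36`, so the lemmas apply there without instance mismatch.
variable {ι : Type*} [Fintype ι] [DecidableEq ι] (B : Submodule (ZMod 2) (ι → ZMod 2))

lemma choose_hammingNorm_eq_card (c : ι → ZMod 2) (d : ℕ) :
    (hammingNorm c).choose d = #{S ∈ powersetCard d univ | ∀ i ∈ S, c i = 1} := by
  have hone : ∀ a : ZMod 2, a ≠ 0 ↔ a = 1 := by decide
  rw [hammingNorm, ← card_powersetCard]
  congr 1
  ext S
  simp [mem_powersetCard, subset_iff, hone, and_comm]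

lemma ite_forall_eq_one_eq_sum_signChar (S : Finset ι) (c : ι → ZMod 2) :
    (if ∀ i ∈ S, c i = 1 then (2 : ℤ) ^ #S else 0) =
      ∑ y ∈ S.powerset, (-1) ^ #y * signChar (∑ i ∈ y, c i) :=
  calc (if ∀ i ∈ S, c i = 1 then (2 : ℤ) ^ #S else 0)
      = ∏ i ∈ S, (1 + -signChar (c i)) := by
        simp_rw [← sub_eq_add_neg, one_sub_signChar, prod_ite_zero, prod_const]
    _ = _ := by simp_rw [prod_one_add, prod_neg, AddChar.map_sum_eq_prod]

lemma sum_signChar_paritySum (y : Finset ι) :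
    ∑ c : B, signChar (paritySum B y c) =
      if IsDualSupport B y then (Fintype.card B : ℤ) else 0 := by
  have htriv : signChar.compAddMonoidHom (paritySum B y) = 0 ↔ IsDualSupport B y := by
    simp [AddChar.eq_zero_iff, signChar_eq_one_iff, IsDualSupport, paritySum]
  rw [← if_congr htriv rfl rfl]
  exact AddChar.sum_eq_ite (signChar.compAddMonoidHom (paritySum B y))

noncomputable def countOnesOn (S : Finset ι) : ℕ := #{c : B | ∀ i ∈ S, (c : ι → ZMod 2) i = 1}

lemma two_pow_card_mul_countOnesOn (S : Finset ι) :
    2 ^ #S * (countOnesOn B S : ℤ) =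
      ∑ y ∈ S.powerset, (-1) ^ #y * if IsDualSupport B y then (Fintype.card B : ℤ) else 0 := by
  simp_rw [← sum_signChar_paritySum, countOnesOn, ← sum_boole, mul_sum, mul_boole,
    ite_forall_eq_one_eq_sum_signChar]
  rw [sum_comm]
  rfl

noncomputable def binomialMoment (d : ℕ) : ℕ :=
  ∑ c : B, (hammingNorm (c : ι → ZMod 2)).choose d

variable {B} {t : ℕ}

lemma two_pow_card_mul_countOnesOn_eq_card (hB : DualDistanceGT B t) {S : Finset ι}
    (hS : #S ≤ t) : 2 ^ #S * countOnesOn B S = Fintype.card B := by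
  zify
  rw [two_pow_card_mul_countOnesOn, sum_eq_single_of_mem ∅ (empty_mem_powerset S)]
  · simp [IsDualSupport]
  · intro y hy hy0
    have hyt : #y ≤ t := (card_le_card (mem_powerset.1 hy)).trans hS
    rw [if_neg (hB y (nonempty_iff_ne_empty.2 hy0) hyt), mul_zero]

lemma card_le_two_pow_card_mul_countOnesOn (hB : DualDistanceGT B t) (ht : Odd t)
    {S : Finset ι} (hS : #S = t + 1) : Fintype.card B ≤ 2 ^ #S * countOnesOn B S := by
  have hS0 : S ≠ ∅ := by rintro rfl; simp at hS
  zify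
  rw [two_pow_card_mul_countOnesOn, ← sum_erase_add _ _ (mem_powerset_self S),
    sum_eq_single_of_mem ∅ (mem_erase.2 ⟨hS0.symm, empty_mem_powerset S⟩)]
  · simp only [card_empty, pow_zero, one_mul, hS, ht.add_one.neg_one_pow, IsDualSupport,
      sum_empty, implies_true, if_true]
    exact le_add_of_nonneg_right (by positivity)
  · intro y hy hy0
    obtain ⟨hyS, hy⟩ := mem_erase.1 hy
    have hyt : #y ≤ t := by
      have := card_lt_card (Finset.ssubset_iff_subset_ne.2 ⟨mem_powerset.1 hy, hyS⟩)
      omega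
    rw [if_neg (hB y (nonempty_iff_ne_empty.2 hy0) hyt), mul_zero]

lemma binomialMoment_eq_sum_countOnesOn (d : ℕ) :
    binomialMoment B d = ∑ S ∈ powersetCard d univ, countOnesOn B S := by
  simp only [binomialMoment, countOnesOn, choose_hammingNorm_eq_card, card_filter]
  exact sum_comm

lemma two_pow_mul_binomialMoment_eq (hB : DualDistanceGT B t) {d : ℕ} (hd : d ≤ t) :
    2 ^ d * binomialMoment B d = (Fintype.card ι).choose d * Fintype.card B := by
  rw [binomialMoment_eq_sum_countOnesOn, mul_sum,
    sum_congr rfl fun S hS => ?_, sum_const, card_powersetCard, card_univ, smul_eq_mul]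
  obtain ⟨-, rfl⟩ := mem_powersetCard.1 hS
  exact two_pow_card_mul_countOnesOn_eq_card hB hd

lemma choose_mul_card_le_two_pow_mul_binomialMoment (hB : DualDistanceGT B t) (ht : Odd t) :
    (Fintype.card ι).choose (t + 1) * Fintype.card B ≤
      2 ^ (t + 1) * binomialMoment B (t + 1) := by
  rw [binomialMoment_eq_sum_countOnesOn, mul_sum, ← card_univ, ← card_powersetCard,
    ← smul_eq_mul, ← sum_const]
  refine sum_le_sum fun S hS => ?_
  obtain ⟨-, hS⟩ := mem_powersetCard.1 hS
  exact hS ▸ card_le_two_pow_card_mul_countOnesOn hB ht hS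

end Moments

def boundPoly (w : ℤ) : ℤ := (w - 16) * (w - 22) ^ 2 * (36 - w)

lemma boundPoly_nonneg {w : ℤ} (h16 : 16 ≤ w) (h36 : w ≤ 36) : 0 ≤ boundPoly w :=
  mul_nonneg (mul_nonneg (by linarith) (sq_nonneg _)) (by linarith)

lemma boundPoly_natCast (w : ℕ) :
    boundPoly w = -24 * w.choose 4 + 540 * w.choose 3 - 6134 * w.choose 2 + 47259 * w.choose 1
      - 278784 := by
  qify
  simp only [boundPoly, Nat.cast_choose_eq_descPochhammer_div, descPochhammer_succ_right,
    descPochhammer_zero, Polynomial.eval_mul, Polynomial.eval_sub, Polynomial.eval_X,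
    Polynomial.eval_natCast, Polynomial.eval_one, Nat.factorial]
  push_cast
  ring

lemma sum_boundPoly_hammingNorm {ι : Type*} [Fintype ι] [DecidableEq ι]
    (B : Submodule (ZMod 2) (ι → ZMod 2)) :
    ∑ c : B, boundPoly (hammingNorm (c : ι → ZMod 2)) =
      -24 * binomialMoment B 4 + 540 * binomialMoment B 3 - 6134 * binomialMoment B 2
        + 47259 * binomialMoment B 1 - 278784 * Fintype.card B := by
  simp only [boundPoly_natCast, binomialMoment, sum_add_distrib, sum_sub_distrib, ← mul_sum,
    sum_const, card_univ, nsmul_eq_mul]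
  push_cast
  ring

lemma boundPoly_zero_le_sum_hammingNorm {B : Submodule (ZMod 2) (Fin 36 → ZMod 2)}
    (hmin : ∀ c ∈ B, c ≠ 0 → 16 ≤ hammingNorm c) :
    boundPoly 0 ≤ ∑ c : B, boundPoly (hammingNorm (c : Fin 36 → ZMod 2)) :=
  calc boundPoly 0 = ∑ c ∈ ({0} : Finset B), boundPoly (hammingNorm (c : Fin 36 → ZMod 2)) := by
        rw [sum_singleton]; rfl
    _ ≤ _ := sum_le_sum_of_subset_of_nonneg (subset_univ _) fun c _ hc => by
      have hc0 : (c : Fin 36 → ZMod 2) ≠ 0 := fun h => notMem_singleton.1 hc (Subtype.ext h)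
      refine boundPoly_nonneg ?_ ?_
      · exact_mod_cast hmin c c.2 hc0
      · exact_mod_cast hammingNorm_le_card_fintype.trans (Fintype.card_fin 36).le

lemma card_le_of_dualDistanceGT_three {B : Submodule (ZMod 2) (Fin 36 → ZMod 2)}
    (hB : DualDistanceGT B 3) (hmin : ∀ c ∈ B, c ≠ 0 → 16 ≤ hammingNorm c) :
    Fintype.card B ≤ 439 := by
  have h1 := two_pow_mul_binomialMoment_eq hB (d := 1) (by norm_num)
  have h2 := two_pow_mul_binomialMoment_eq hB (d := 2) (by norm_num)
  have h3 := two_pow_mul_binomialMoment_eq hB (d := 3) le_rfl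
  have h4 := choose_mul_card_le_two_pow_mul_binomialMoment hB (by decide)
  have hsum := (boundPoly_zero_le_sum_hammingNorm hmin).trans_eq (sum_boundPoly_hammingNorm B)
  rw [Fintype.card_fin] at h1 h2 h3 h4
  simp only [Nat.reduceAdd, show Nat.choose 36 1 = 36 from rfl,
    show Nat.choose 36 2 = 630 from rfl, show Nat.choose 36 3 = 7140 from rfl,
    show Nat.choose 36 4 = 58905 from rfl] at h1 h2 h3 h4
  rw [show boundPoly 0 = -278784 from rfl] at hsum
  omega

end BinaryCode

theorem stmt3_general (k : ℕ) (B : Submodule (ZMod 2) (Fin 36 → ZMod 2))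
    (hdim : Module.finrank (ZMod 2) B = k)
    (hmin : ∀ c ∈ B, c ≠ 0 → 16 ≤ wt c)
    (hdual : ∀ x : Fin 36 → ZMod 2,
      (∀ c ∈ B, ∑ i, x i * c i = 0) → x ≠ 0 → 4 ≤ wt x) :
    k ≤ 8 := by
  have hcard : Fintype.card B = 2 ^ k := by
    rw [Module.card_eq_pow_finrank (K := ZMod 2), ZMod.card, hdim]
  have hle : Fintype.card B ≤ 439 := BinaryCode.card_le_of_dualDistanceGT_three
    (BinaryCode.dualDistanceGT_of_lt_hammingNorm hdual) hmin
  by_contra! hk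
  have := Nat.pow_le_pow_right two_pos hk
  omega

theorem stmt3 (k : ℕ) (B : Submodule (ZMod 2) (Fin 36 → ZMod 2))
    (hdim : Module.finrank (ZMod 2) B = k)
    (hde : ∀ c ∈ B, 4 ∣ wt c)
    (hmin : ∀ c ∈ B, c ≠ 0 → 16 ≤ wt c)
    (hdual : ∀ x : Fin 36 → ZMod 2,
      (∀ c ∈ B, ∑ i, x i * c i = 0) → x ≠ 0 → 4 ≤ wt x) :
    k ≤ 8 :=
  stmt3_general k B hdim hmin hdual
end

section
/- If C is a self-dual Z_4-code of length n, then the lattice A_4(C) = (1/2){x ∈ Z^n : x mod 4 ∈ C} is unimodular, i.e., equal to its dual lattice. -/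
open scoped Classical

/-- The lattice `A₄(C) = (1/2){x ∈ ℤⁿ : x mod 4 ∈ C}`. -/
def A4 {n : ℕ} (C : Submodule (ZMod 4) (Fin n → ZMod 4)) : Set (Fin n → ℝ) :=
  {v | ∃ x : Fin n → ℤ, (∀ i, v i = (x i : ℝ) / 2) ∧
    (fun i => (x i : ZMod 4)) ∈ C}

/-- The dual of a set of vectors in `ℝⁿ`. -/
def dualLattice {n : ℕ} (L : Set (Fin n → ℝ)) : Set (Fin n → ℝ) :=
  {v | ∀ w ∈ L, ∃ m : ℤ, ∑ i, v i * w i = (m : ℝ)}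

/-!
Write `v = x / 2` and `w = y / 2` with `x, y ∈ ℤⁿ`. Then `⟨v, w⟩ = ⟨x, y⟩ / 4`, which is an integer
exactly when `x mod 4` and `y mod 4` are orthogonal in `(ℤ/4)ⁿ`. Self-orthogonality of `C` therefore
gives `A₄(C) ⊆ A₄(C)*`. Conversely, `2 eᵢ ∈ A₄(C)` forces every vector of the dual into `(1/2) ℤⁿ`,
and pairing it with the lifts of the codewords shows that its reduction lies in `C⊥ = C`.
-/

open Finset

theorem exists_intCast_eq_div_four_iff (a : ℤ) :
    (∃ m : ℤ, (a : ℝ) / 4 = m) ↔ (a : ZMod 4) = 0 := by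
  rw [ZMod.intCast_zmod_eq_zero_iff_dvd]
  constructor
  · rintro ⟨m, hm⟩
    exact ⟨m, by exact_mod_cast (by linarith : (a : ℝ) = 4 * m)⟩
  · rintro ⟨m, rfl⟩
    exact ⟨m, by push_cast; ring⟩

theorem exists_int_sum_mul_iff {ι : Type*} [Fintype ι] {v w : ι → ℝ} {x y : ι → ℤ}
    (hv : ∀ i, v i = x i / 2) (hw : ∀ i, w i = y i / 2) :
    (∃ m : ℤ, ∑ i, v i * w i = m) ↔ ∑ i, (x i : ZMod 4) * (y i : ZMod 4) = 0 := by
  have hsum : ∑ i, v i * w i = ((∑ i, x i * y i : ℤ) : ℝ) / 4 := by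
    push_cast
    rw [sum_div]
    exact sum_congr rfl fun i _ => by rw [hv, hw]; ring
  rw [hsum, exists_intCast_eq_div_four_iff]
  push_cast
  rfl

theorem pi_single_two_mem_A4 {n : ℕ} (C : Submodule (ZMod 4) (Fin n → ZMod 4)) (i : Fin n) :
    Pi.single i 2 ∈ A4 C := by
  refine ⟨Pi.single i 4, fun j => ?_, ?_⟩
  · rcases eq_or_ne j i with rfl | hji
    · norm_num
    · simp [hji]
  · convert C.zero_mem using 1
    funext j
    rcases eq_or_ne j i with rfl | hji
    · simp only [Pi.single_eq_same, Pi.zero_apply, Int.cast_ofNat]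
      rfl
    · simp [hji]

theorem exists_int_eq_div_two_of_mem_dualLattice {n : ℕ} {C : Submodule (ZMod 4) (Fin n → ZMod 4)}
    {v : Fin n → ℝ} (hv : v ∈ dualLattice (A4 C)) (i : Fin n) : ∃ m : ℤ, v i = m / 2 := by
  obtain ⟨m, hm⟩ := hv _ (pi_single_two_mem_A4 C i)
  refine ⟨m, ?_⟩
  simp only [Pi.single_apply, mul_ite, mul_zero, sum_ite_eq', mem_univ, if_true] at hm
  linarith

theorem A4_subset_dualLattice {n : ℕ} {C : Submodule (ZMod 4) (Fin n → ZMod 4)}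
    (hC : ∀ x ∈ C, ∀ c ∈ C, ∑ i, x i * c i = 0) : A4 C ⊆ dualLattice (A4 C) := by
  rintro v ⟨x, hv, hx⟩ w ⟨y, hw, hy⟩
  exact (exists_int_sum_mul_iff hv hw).mpr (hC _ hx _ hy)

theorem dualLattice_A4_subset {n : ℕ} {C : Submodule (ZMod 4) (Fin n → ZMod 4)}
    (hC : ∀ x : Fin n → ZMod 4, (∀ c ∈ C, ∑ i, x i * c i = 0) → x ∈ C) :
    dualLattice (A4 C) ⊆ A4 C := by
  intro v hv
  choose x hx using exists_int_eq_div_two_of_mem_dualLattice hv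
  refine ⟨x, hx, hC _ fun c hc => ?_⟩
  have hlift : (fun i => ((c i).cast : ℤ) / (2 : ℝ)) ∈ A4 C :=
    ⟨fun i => (c i).cast, fun _ => rfl, by simpa only [ZMod.intCast_zmod_cast] using hc⟩
  simpa only [ZMod.intCast_zmod_cast] using
    (exists_int_sum_mul_iff hx (fun _ => rfl)).mp (hv _ hlift)

theorem stmt7 (n : ℕ) (C : Submodule (ZMod 4) (Fin n → ZMod 4))
    (hsd : ∀ x : Fin n → ZMod 4, x ∈ C ↔ ∀ c ∈ C, ∑ i, x i * c i = 0) :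
    A4 C = dualLattice (A4 C) :=
  (A4_subset_dualLattice fun x hx => (hsd x).mp hx).antisymm
    (dualLattice_A4_subset fun x hx => (hsd x).mpr hx)
end

section
/- If C is a self-dual Z_4-code of length n, then the minimum norm of the lattice A_4(C) equals min{4, d_E(C)/4}, where d_E(C) is the minimum Euclidean weight of C. -/
/-!
Every vector of `A₄(C)` is `x / 2` with `x ∈ ℤⁿ`, `x mod 4 ∈ C`, so its norm is `‖x‖² / 4`. If
`x mod 4 = 0`, then `x ∈ 4ℤⁿ` and `‖x‖² ≥ 16`; otherwise `‖x‖²` is at least the Euclidean weight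
of `x mod 4`, because the weight of `b ∈ ℤ/4` is the square of its least absolute lift. Both
bounds are attained, by `4e₁` and by the least absolute lift of a word of minimum weight. A
self-dual code of positive length is nonzero, so the minimum is `min 16 d_E(C) / 4`.
-/

open scoped Classical

/-- Euclidean weight of a vector over `ZMod 4`. -/
noncomputable def euclWt {n : ℕ} (c : Fin n → ZMod 4) : ℕ :=
  ∑ i, (if c i = 1 then 1 else if c i = 2 then 4 else if c i = 3 then 1 else 0)

/-- Minimum Euclidean weight of a `ZMod 4`-code. -/
noncomputable def dE {n : ℕ} (C : Submodule (ZMod 4) (Fin n → ZMod 4)) : ℕ :=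
  sInf {w | ∃ c ∈ C, c ≠ 0 ∧ euclWt c = w}

lemma ZMod.valMinAbs_intCast_sq_le {m : ℕ} [NeZero m] (a : ℤ) :
    (a : ZMod m).valMinAbs ^ 2 ≤ a ^ 2 := by
  have h := ZMod.natAbs_min_of_le_div_two m _ a (ZMod.coe_valMinAbs _)
    (ZMod.natAbs_valMinAbs_le _)
  rw [← Int.natAbs_sq, ← Int.natAbs_sq a]
  exact pow_le_pow_left₀ (Int.natCast_nonneg _) (by exact_mod_cast h) 2

lemma sq_le_sq_of_dvd {m a : ℤ} (ha : a ≠ 0) (hdvd : m ∣ a) : m ^ 2 ≤ a ^ 2 := by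
  obtain ⟨k, rfl⟩ := hdvd
  have hk : 1 ≤ k ^ 2 := by
    rw [← sq_abs]
    exact one_le_pow₀ (Int.one_le_abs (right_ne_zero_of_mul ha))
  rw [mul_pow]
  exact le_mul_of_one_le_right (sq_nonneg m) hk

section EuclideanWeight

variable {n : ℕ}

lemma euclWt_eq_sum_valMinAbs_sq (c : Fin n → ZMod 4) :
    (euclWt c : ℤ) = ∑ i, (c i).valMinAbs ^ 2 := by
  unfold euclWt
  push_cast
  refine Finset.sum_congr rfl fun i _ => ?_
  generalize c i = b
  revert b
  decide

lemma euclWt_intCast_le_sum_sq (x : Fin n → ℤ) :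
    (euclWt (fun i => (x i : ZMod 4)) : ℤ) ≤ ∑ i, x i ^ 2 := by
  rw [euclWt_eq_sum_valMinAbs_sq]
  exact Finset.sum_le_sum fun i _ => ZMod.valMinAbs_intCast_sq_le (x i)

lemma dE_le_euclWt {C : Submodule (ZMod 4) (Fin n → ZMod 4)} {c : Fin n → ZMod 4}
    (hc : c ∈ C) (hc0 : c ≠ 0) : dE C ≤ euclWt c :=
  Nat.sInf_le ⟨c, hc, hc0, rfl⟩

lemma exists_euclWt_eq_dE {C : Submodule (ZMod 4) (Fin n → ZMod 4)} (hC : C ≠ ⊥) :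
    ∃ c ∈ C, c ≠ 0 ∧ euclWt c = dE C := by
  obtain ⟨c, hc, hc0⟩ := Submodule.exists_mem_ne_zero_of_ne_bot hC
  exact Nat.sInf_mem (s := {w | ∃ c ∈ C, c ≠ 0 ∧ euclWt c = w}) ⟨_, c, hc, hc0, rfl⟩

end EuclideanWeight

section LiftNorms

variable {n : ℕ} (C : Submodule (ZMod 4) (Fin n → ZMod 4))

def liftNorms : Set ℤ :=
  {k | ∃ x : Fin n → ℤ, x ≠ 0 ∧ (fun i => (x i : ZMod 4)) ∈ C ∧ ∑ i, x i ^ 2 = k}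

variable {C}

lemma min_le_of_mem_liftNorms {k : ℤ} (hk : k ∈ liftNorms C) : min 16 (dE C : ℤ) ≤ k := by
  obtain ⟨x, hx0, hxC, rfl⟩ := hk
  by_cases hc : (fun i => (x i : ZMod 4)) = 0
  · obtain ⟨j, hj⟩ := Function.ne_iff.mp hx0
    have h4 : (4 : ℤ) ∣ x j := (ZMod.intCast_zmod_eq_zero_iff_dvd _ 4).mp (congrFun hc j)
    calc min 16 (dE C : ℤ) ≤ 4 ^ 2 := min_le_left _ _
      _ ≤ x j ^ 2 := sq_le_sq_of_dvd hj h4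
      _ ≤ ∑ i, x i ^ 2 :=
        Finset.single_le_sum (fun i _ => sq_nonneg (x i)) (Finset.mem_univ j)
  · calc min 16 (dE C : ℤ) ≤ dE C := min_le_right _ _
      _ ≤ euclWt (fun i => (x i : ZMod 4)) := by exact_mod_cast dE_le_euclWt hxC hc
      _ ≤ ∑ i, x i ^ 2 := euclWt_intCast_le_sum_sq x

lemma sixteen_mem_liftNorms [Nonempty (Fin n)] : 16 ∈ liftNorms C := by
  let j : Fin n := Classical.arbitrary _
  refine ⟨Pi.single j 4, by simp, ?_, ?_⟩
  · convert C.zero_mem using 1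
    funext i
    rw [Pi.single_apply]
    split_ifs
    exacts [(by decide : ((4 : ℤ) : ZMod 4) = 0), Int.cast_zero]
  · rw [Finset.sum_eq_single j (fun i _ hi => by simp [hi]) (by simp)]
    norm_num

lemma dE_mem_liftNorms (hC : C ≠ ⊥) : (dE C : ℤ) ∈ liftNorms C := by
  obtain ⟨c, hc, hc0, hwt⟩ := exists_euclWt_eq_dE hC
  refine ⟨fun i => (c i).valMinAbs, ?_, ?_, ?_⟩
  · obtain ⟨j, hj⟩ := Function.ne_iff.mp hc0
    exact Function.ne_iff.mpr ⟨j, (ZMod.valMinAbs_eq_zero _).not.mpr hj⟩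
  · simpa only [ZMod.coe_valMinAbs] using hc
  · rw [← hwt, euclWt_eq_sum_valMinAbs_sq]

lemma isLeast_liftNorms (hC : C ≠ ⊥) : IsLeast (liftNorms C) (min 16 (dE C : ℤ)) := by
  have : Nonempty (Fin n) := by
    obtain ⟨c, -, hc0⟩ := Submodule.exists_mem_ne_zero_of_ne_bot hC
    obtain ⟨j, -⟩ := Function.ne_iff.mp hc0
    exact ⟨j⟩
  refine ⟨?_, fun k hk => min_le_of_mem_liftNorms hk⟩
  rcases min_choice 16 (dE C : ℤ) with h | h <;> rw [h]
  exacts [sixteen_mem_liftNorms, dE_mem_liftNorms hC]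

lemma sum_half_mul_half (x : Fin n → ℤ) :
    ∑ i, (x i : ℝ) / 2 * ((x i : ℝ) / 2) = ((∑ i, x i ^ 2 : ℤ) : ℝ) / 4 := by
  push_cast
  rw [Finset.sum_div]
  exact Finset.sum_congr rfl fun i _ => by ring

lemma norms_A4_eq_image_liftNorms :
    {r : ℝ | ∃ v ∈ A4 C, v ≠ 0 ∧ ∑ i, v i * v i = r}
      = (fun k : ℤ => (k : ℝ) / 4) '' liftNorms C := by
  ext r
  constructor
  · rintro ⟨v, ⟨x, hvx, hxC⟩, hv0, rfl⟩
    have hv : v = fun i => (x i : ℝ) / 2 := funext hvx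
    subst hv
    refine ⟨_, ⟨x, ?_, hxC, rfl⟩, (sum_half_mul_half x).symm⟩
    rintro rfl
    exact hv0 (funext fun i => by simp)
  · rintro ⟨k, ⟨x, hx0, hxC, rfl⟩, rfl⟩
    refine ⟨fun i => (x i : ℝ) / 2, ⟨x, fun i => rfl, hxC⟩, ?_, sum_half_mul_half x⟩
    obtain ⟨j, hj⟩ := Function.ne_iff.mp hx0
    exact Function.ne_iff.mpr ⟨j, by simpa using hj⟩

end LiftNorms

lemma Submodule.ne_bot_of_orthogonal_subset {R ι : Type*} [CommRing R] [Nontrivial R]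
    [Fintype ι] [Nonempty ι] {C : Submodule R (ι → R)}
    (hC : ∀ x : ι → R, (∀ c ∈ C, ∑ i, x i * c i = 0) → x ∈ C) : C ≠ ⊥ := by
  intro hbot
  have h1 : (fun _ => 1 : ι → R) ∈ C := hC _ fun c hc => by
    rw [hbot, Submodule.mem_bot] at hc
    simp [hc]
  rw [hbot, Submodule.mem_bot] at h1
  exact one_ne_zero (congrFun h1 (Classical.arbitrary ι))

theorem stmt9 (n : ℕ) (C : Submodule (ZMod 4) (Fin n → ZMod 4))
    (hsd : ∀ x : Fin n → ZMod 4, x ∈ C ↔ ∀ c ∈ C, ∑ i, x i * c i = 0) :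
    sInf {r : ℝ | ∃ v ∈ A4 C, v ≠ 0 ∧ ∑ i, v i * v i = r}
      = min (4 : ℝ) ((dE C : ℝ) / 4) := by
  rcases isEmpty_or_nonempty (Fin n) with _ | _
  · have hnorms : {r : ℝ | ∃ v ∈ A4 C, v ≠ 0 ∧ ∑ i, v i * v i = r} = ∅ :=
      Set.eq_empty_of_forall_notMem fun r ⟨v, _, hv0, _⟩ => hv0 (Subsingleton.elim v 0)
    have hdE : dE C = 0 := by
      rw [dE, Nat.sInf_eq_zero]
      exact Or.inr (Set.eq_empty_of_forall_notMem fun w ⟨c, _, hc0, _⟩ =>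
        hc0 (Subsingleton.elim c 0))
    rw [hnorms, hdE]
    simp
  · have : Fact (1 < 4) := ⟨by norm_num⟩
    have hmono : Monotone fun k : ℤ => (k : ℝ) / 4 := fun a b hab => by
      dsimp only
      gcongr
    have hC : C ≠ ⊥ := Submodule.ne_bot_of_orthogonal_subset fun x => (hsd x).mpr
    rw [norms_A4_eq_image_liftNorms, (hmono.map_isLeast (isLeast_liftNorms hC)).csInf_eq]
    push_cast
    rw [← min_div_div_right (by norm_num)]
    norm_num
end
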